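/- arXiv:2310.06991 — 5 statements merged into one kernel-verified Lean document; each statement's English description precedes it below -/
import Mathlib

section
/- In the classical vector space ℝ³ over ℝ, define the external hyperoperation a∘(x₀,y₀,z₀) = {(a·x₀, a·y₀, t) : t ∈ ℝ}. Then (ℝ³, +, ∘, ℝ) is a strongly left distributive hypervector space, i.e., it satisfies all five hypervector space axioms with equality in (H2): (a+b)∘x = a∘x + b∘x. -/
/-- The external hyperoperation on `ℝ³`: `a ∘ (x₀,y₀,z₀)` is the line
`{(a·x₀, a·y₀, t) : t ∈ ℝ}`. -/
def circ (a : ℝ) (v : ℝ × ℝ × ℝ) : Set (ℝ × ℝ × ℝ) :=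
  {p | p.1 = a * v.1 ∧ p.2.1 = a * v.2.1}

/-- `(ℝ³, +, ∘, ℝ)` is a strongly left distributive hypervector space: it satisfies
the five axioms, with equality in (H2). -/
theorem stmt1 :
    (∀ (a : ℝ) (x : ℝ × ℝ × ℝ), (circ a x).Nonempty) ∧
    (∀ (a : ℝ) (x y : ℝ × ℝ × ℝ),
      circ a (x + y) ⊆ Set.image2 (· + ·) (circ a x) (circ a y)) ∧
    (∀ (a b : ℝ) (x : ℝ × ℝ × ℝ),
      circ (a + b) x = Set.image2 (· + ·) (circ a x) (circ b x)) ∧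
    (∀ (a b : ℝ) (x : ℝ × ℝ × ℝ),
      (⋃ t ∈ circ b x, circ a t) = circ (a * b) x) ∧
    (∀ (a : ℝ) (x : ℝ × ℝ × ℝ),
      circ a (-x) = circ (-a) x ∧ circ a (-x) = Neg.neg '' circ a x) ∧
    (∀ x : ℝ × ℝ × ℝ, x ∈ circ 1 x) := by
  refine ⟨?_, ?_, ?_, ?_, ?_, ?_⟩
  · intro a x
    exact ⟨(a * x.1, a * x.2.1, 0), rfl, rfl⟩
  · rintro a x y ⟨p1, p2, p3⟩ ⟨h1, h2⟩
    refine ⟨(a * x.1, a * x.2.1, 0), ⟨rfl, rfl⟩, (a * y.1, a * y.2.1, p3), ⟨rfl, rfl⟩, ?_⟩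
    simp only [Prod.fst_add, Prod.snd_add] at h1 h2
    simp [Prod.ext_iff, h1, h2, mul_add]
  · intro a b x
    ext ⟨p1, p2, p3⟩
    constructor
    · rintro ⟨h1, h2⟩
      refine ⟨(a * x.1, a * x.2.1, 0), ⟨rfl, rfl⟩, (b * x.1, b * x.2.1, p3), ⟨rfl, rfl⟩, ?_⟩
      simp only at h1 h2
      simp [Prod.ext_iff, h1, h2, add_mul]
    · rintro ⟨u, ⟨hu1, hu2⟩, v, ⟨hv1, hv2⟩, h⟩
      rw [← h]
      exact ⟨by simp [hu1, hv1, add_mul], by simp [hu2, hv2, add_mul]⟩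
  · intro a b x
    ext ⟨p1, p2, p3⟩
    simp only [Set.mem_iUnion, circ, Set.mem_setOf_eq]
    constructor
    · rintro ⟨t, ⟨ht1, ht2⟩, h1, h2⟩
      exact ⟨by rw [h1, ht1, mul_assoc], by rw [h2, ht2, mul_assoc]⟩
    · rintro ⟨h1, h2⟩
      exact ⟨(b * x.1, b * x.2.1, 0), ⟨rfl, rfl⟩, by rw [h1, mul_assoc], by rw [h2, mul_assoc]⟩
  · intro a x
    constructor
    · ext ⟨p1, p2, p3⟩
      simp [circ, mul_neg, neg_mul]
    · ext ⟨p1, p2, p3⟩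
      simp only [circ, Set.mem_setOf_eq, Set.mem_image, Prod.ext_iff]
      constructor
      · rintro ⟨h1, h2⟩
        refine ⟨(-p1, -p2, -p3), ⟨?_, ?_⟩, by simp⟩ <;> simp at h1 h2 ⊢ <;> linarith
      · rintro ⟨⟨q1, q2, q3⟩, ⟨h1, h2⟩, he1, he2, he3⟩
        simp at h1 h2 he1 he2 he3 ⊢
        constructor <;> linarith
  · intro x
    exact ⟨(one_mul _).symm, (one_mul _).symm⟩
end

section
/- If (F,A) and (G,B) are bipolar fuzzy soft hypervector spaces of a hypervector space V, then their sum (F+G, A∩B) is a bipolar fuzzy soft hypervector space of V, where (F+G)⁺ₑ(x) = ⨆_{x=y+z} min(F⁺ₑ(y), G⁺ₑ(z)) and (F+G)⁻ₑ(x) = ⨅_{x=y+z} max(F⁻ₑ(y), G⁻ₑ(z)). -/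
/-- A hypervector space over a field `K`: an abelian group `V` with an external
hyperoperation `smul : K → V → Set V` satisfying axioms (H1)–(H5). -/
structure HVS (K V : Type*) [Field K] [AddCommGroup V] where
  smul : K → V → Set V
  nonempty' : ∀ a x, (smul a x).Nonempty
  h1 : ∀ a x y, smul a (x + y) ⊆ Set.image2 (· + ·) (smul a x) (smul a y)
  h2 : ∀ a b x, smul (a + b) x ⊆ Set.image2 (· + ·) (smul a x) (smul b x)
  h3 : ∀ a b x, (⋃ t ∈ smul b x, smul a t) = smul (a * b) x
  h4a : ∀ a x, smul a (-x) = smul (-a) x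
  h4b : ∀ a x, smul a (-x) = Neg.neg '' smul a x
  h5 : ∀ x, x ∈ smul 1 x

/-- `p, n` (the positive and negative membership functions of a bipolar fuzzy set)
form a bipolar fuzzy subhyperspace of the hypervector space `H`. -/
def IsBFSub {K V : Type*} [Field K] [AddCommGroup V] (H : HVS K V)
    (p n : V → ℝ) : Prop :=
  (∀ x y, p (x - y) ≥ min (p x) (p y)) ∧
  (∀ x y, n (x - y) ≤ max (n x) (n y)) ∧
  (∀ a x, sInf (p '' H.smul a x) ≥ p x) ∧
  (∀ a x, sSup (n '' H.smul a x) ≤ n x)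

/-- The sum `(F+G, A ∩ B)` of bipolar fuzzy soft hypervector spaces of `V` is a
bipolar fuzzy soft hypervector space of `V`. -/
theorem stmt12 {K V E : Type*} [Field K] [AddCommGroup V] (H : HVS K V)
    (A B : Set E) (Fp Fn Gp Gn : E → V → ℝ)
    (hFr : ∀ e ∈ A, ∀ x, Fp e x ∈ Set.Icc (0:ℝ) 1 ∧ Fn e x ∈ Set.Icc (-1:ℝ) 0)
    (hGr : ∀ e ∈ B, ∀ x, Gp e x ∈ Set.Icc (0:ℝ) 1 ∧ Gn e x ∈ Set.Icc (-1:ℝ) 0)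
    (hF : ∀ e ∈ A, IsBFSub H (Fp e) (Fn e))
    (hG : ∀ e ∈ B, IsBFSub H (Gp e) (Gn e)) :
    ∀ e ∈ A ∩ B,
      IsBFSub H
        (fun x => sSup {r | ∃ y z, x = y + z ∧ r = min (Fp e y) (Gp e z)})
        (fun x => sInf {r | ∃ y z, x = y + z ∧ r = max (Fn e y) (Gn e z)}) := by
  rintro e ⟨heA, heB⟩
  obtain ⟨hF1, hF2, hF3, hF4⟩ := hF e heA
  obtain ⟨hG1, hG2, hG3, hG4⟩ := hG e heB
  set P : V → Set ℝ := fun x => {r | ∃ y z, x = y + z ∧ r = min (Fp e y) (Gp e z)} with hPdef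
  set N : V → Set ℝ := fun x => {r | ∃ y z, x = y + z ∧ r = max (Fn e y) (Gn e z)} with hNdef
  have hPmem : ∀ x y z : V, x = y + z → min (Fp e y) (Gp e z) ∈ P x := by
    intro x y z hx
    exact ⟨y, z, hx, rfl⟩
  have hNmem : ∀ x y z : V, x = y + z → max (Fn e y) (Gn e z) ∈ N x := by
    intro x y z hx
    exact ⟨y, z, hx, rfl⟩
  have hPne : ∀ x, (P x).Nonempty := fun x => ⟨_, hPmem x x 0 (by simp)⟩
  have hNne : ∀ x, (N x).Nonempty := fun x => ⟨_, hNmem x x 0 (by simp)⟩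
  have hPbdd : ∀ x, BddAbove (P x) := by
    intro x
    refine ⟨1, ?_⟩
    rintro r ⟨y, z, -, rfl⟩
    exact le_trans (min_le_left _ _) (hFr e heA y).1.2
  have hNbdd : ∀ x, BddBelow (N x) := by
    intro x
    refine ⟨-1, ?_⟩
    rintro r ⟨y, z, -, rfl⟩
    exact le_trans (hFr e heA y).2.1 (le_max_left _ _)
  have hFpbdd : ∀ a y, BddBelow (Fp e '' H.smul a y) := by
    intro a y
    refine ⟨0, ?_⟩
    rintro r ⟨t, -, rfl⟩
    exact (hFr e heA t).1.1
  have hGpbdd : ∀ a y, BddBelow (Gp e '' H.smul a y) := by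
    intro a y
    refine ⟨0, ?_⟩
    rintro r ⟨t, -, rfl⟩
    exact (hGr e heB t).1.1
  have hFnbdd : ∀ a y, BddAbove (Fn e '' H.smul a y) := by
    intro a y
    refine ⟨0, ?_⟩
    rintro r ⟨t, -, rfl⟩
    exact (hFr e heA t).2.2
  have hGnbdd : ∀ a y, BddAbove (Gn e '' H.smul a y) := by
    intro a y
    refine ⟨0, ?_⟩
    rintro r ⟨t, -, rfl⟩
    exact (hGr e heB t).2.2
  refine ⟨?_, ?_, ?_, ?_⟩
  · -- positive difference
    intro x y
    by_contra hcon
    push_neg at hcon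
    obtain ⟨s, hs, hcs⟩ := exists_lt_of_lt_csSup (hPne x)
      (lt_of_lt_of_le hcon (min_le_left _ _))
    obtain ⟨t, ht, hct⟩ := exists_lt_of_lt_csSup (hPne y)
      (lt_of_lt_of_le hcon (min_le_right _ _))
    obtain ⟨a, b, hxab, rfl⟩ := hs
    obtain ⟨c, d, hycd, rfl⟩ := ht
    have hxy : x - y = (a - c) + (b - d) := by
      rw [hxab, hycd]; abel
    have h1 : min (Fp e a) (Gp e b) ⊓ min (Fp e c) (Gp e d)
        ≤ min (Fp e (a - c)) (Gp e (b - d)) := by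
      have hF' := hF1 a c
      have hG' := hG1 b d
      simp only [ge_iff_le, le_min_iff] at *
      constructor
      · exact le_trans (min_le_min (min_le_left _ _) (min_le_left _ _)) hF'
      · exact le_trans (min_le_min (min_le_right _ _) (min_le_right _ _)) hG'
    have h2 : min (Fp e (a - c)) (Gp e (b - d)) ≤ sSup (P (x - y)) :=
      le_csSup (hPbdd _) (hPmem _ _ _ hxy)
    have : sSup (P (x - y)) < min (Fp e a) (Gp e b) ⊓ min (Fp e c) (Gp e d) :=
      lt_min hcs hct
    linarith [le_trans h1 h2]
  · -- negative difference
    intro x y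
    by_contra hcon
    push_neg at hcon
    obtain ⟨s, hs, hcs⟩ := exists_lt_of_csInf_lt (hNne x)
      (lt_of_le_of_lt (le_max_left _ _) hcon)
    obtain ⟨t, ht, hct⟩ := exists_lt_of_csInf_lt (hNne y)
      (lt_of_le_of_lt (le_max_right _ _) hcon)
    obtain ⟨a, b, hxab, rfl⟩ := hs
    obtain ⟨c, d, hycd, rfl⟩ := ht
    have hxy : x - y = (a - c) + (b - d) := by
      rw [hxab, hycd]; abel
    have h1 : max (Fn e (a - c)) (Gn e (b - d))
        ≤ max (Fn e a) (Gn e b) ⊔ max (Fn e c) (Gn e d) := by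
      have hF' := hF2 a c
      have hG' := hG2 b d
      simp only [max_le_iff] at *
      constructor
      · exact le_trans hF' (max_le_max (le_max_left _ _) (le_max_left _ _))
      · exact le_trans hG' (max_le_max (le_max_right _ _) (le_max_right _ _))
    have h2 : sInf (N (x - y)) ≤ max (Fn e (a - c)) (Gn e (b - d)) :=
      csInf_le (hNbdd _) (hNmem _ _ _ hxy)
    have : max (Fn e a) (Gn e b) ⊔ max (Fn e c) (Gn e d) < sInf (N (x - y)) :=
      max_lt hcs hct
    linarith [le_trans h2 h1]
  · -- positive smul
    intro a x
    refine le_csInf ((H.nonempty' a x).image _) ?_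
    rintro b ⟨t, ht, rfl⟩
    refine csSup_le (hPne x) ?_
    rintro r ⟨y, z, hxyz, rfl⟩
    rw [hxyz] at ht
    obtain ⟨u, hu, v, hv, huv⟩ := H.h1 a y z ht
    have hFy : Fp e y ≤ Fp e u :=
      le_trans (hF3 a y) (csInf_le (hFpbdd a y) (Set.mem_image_of_mem _ hu))
    have hGz : Gp e z ≤ Gp e v :=
      le_trans (hG3 a z) (csInf_le (hGpbdd a z) (Set.mem_image_of_mem _ hv))
    calc min (Fp e y) (Gp e z) ≤ min (Fp e u) (Gp e v) := min_le_min hFy hGz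
      _ ≤ sSup (P t) := le_csSup (hPbdd t) (hPmem t u v huv.symm)
  · -- negative smul
    intro a x
    refine csSup_le ((H.nonempty' a x).image _) ?_
    rintro b ⟨t, ht, rfl⟩
    refine le_csInf (hNne x) ?_
    rintro r ⟨y, z, hxyz, rfl⟩
    rw [hxyz] at ht
    obtain ⟨u, hu, v, hv, huv⟩ := H.h1 a y z ht
    have hFy : Fn e u ≤ Fn e y :=
      le_trans (le_csSup (hFnbdd a y) (Set.mem_image_of_mem _ hu)) (hF4 a y)
    have hGz : Gn e v ≤ Gn e z :=
      le_trans (le_csSup (hGnbdd a z) (Set.mem_image_of_mem _ hv)) (hG4 a z)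
    calc sInf (N t) ≤ max (Fn e u) (Gn e v) := csInf_le (hNbdd t) (hNmem t u v huv.symm)
      _ ≤ max (Fn e y) (Gn e z) := max_le_max hFy hGz
end

section
/- Let V be a strongly right distributive hypervector space over K (i.e., a∘(x+y) = a∘x + a∘y) and let (F,A) be a bipolar fuzzy soft hypervector space of V. Then for every a ∈ K, the scalar product (a∘F, A) is a bipolar fuzzy soft hypervector space of V, where (a∘F)⁺ₑ(x) = ⨆_{t : x∈a∘t} F⁺ₑ(t) if some t with x ∈ a∘t exists and 0 otherwise, and (a∘F)⁻ₑ(x) = ⨅_{t : x∈a∘t} F⁻ₑ(t) if such t exists and 0 otherwise. -/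
open Classical in
/-- Positive part of the scalar product `a ∘ F`. -/
noncomputable def sProdP {K V : Type*} [Field K] [AddCommGroup V] (H : HVS K V)
    (a : K) (p : V → ℝ) (x : V) : ℝ :=
  if ∃ t, x ∈ H.smul a t then sSup {r | ∃ t, x ∈ H.smul a t ∧ r = p t} else 0

open Classical in
/-- Negative part of the scalar product `a ∘ F`. -/
noncomputable def sProdN {K V : Type*} [Field K] [AddCommGroup V] (H : HVS K V)
    (a : K) (n : V → ℝ) (x : V) : ℝ :=
  if ∃ t, x ∈ H.smul a t then sInf {r | ∃ t, x ∈ H.smul a t ∧ r = n t} else 0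

section Aux

variable {K V : Type*} [Field K] [AddCommGroup V] (H : HVS K V) (a : K)

lemma witness_le_sProdP {p : V → ℝ} (hp1 : ∀ x, p x ≤ 1) {x t : V}
    (ht : x ∈ H.smul a t) : p t ≤ sProdP H a p x := by
  rw [sProdP, if_pos ⟨t, ht⟩]
  exact le_csSup ⟨1, by rintro r ⟨s, _, rfl⟩; exact hp1 s⟩ ⟨t, ht, rfl⟩

lemma sProdN_le_witness {n : V → ℝ} (hn1 : ∀ x, -1 ≤ n x) {x t : V}
    (ht : x ∈ H.smul a t) : sProdN H a n x ≤ n t := by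
  rw [sProdN, if_pos ⟨t, ht⟩]
  exact csInf_le ⟨-1, by rintro r ⟨s, _, rfl⟩; exact hn1 s⟩ ⟨t, ht, rfl⟩

lemma sProdP_nonneg {p : V → ℝ} (hp0 : ∀ x, 0 ≤ p x) (hp1 : ∀ x, p x ≤ 1) (x : V) :
    0 ≤ sProdP H a p x := by
  by_cases h : ∃ t, x ∈ H.smul a t
  · obtain ⟨t, ht⟩ := h
    exact le_trans (hp0 t) (witness_le_sProdP H a hp1 ht)
  · rw [sProdP, if_neg h]

lemma sProdN_nonpos {n : V → ℝ} (hn0 : ∀ x, n x ≤ 0) (hn1 : ∀ x, -1 ≤ n x) (x : V) :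
    sProdN H a n x ≤ 0 := by
  by_cases h : ∃ t, x ∈ H.smul a t
  · obtain ⟨t, ht⟩ := h
    exact le_trans (sProdN_le_witness H a hn1 ht) (hn0 t)
  · rw [sProdN, if_neg h]

lemma sProdP_le {p : V → ℝ} {x : V} {c : ℝ} (hc : 0 ≤ c)
    (h : ∀ t, x ∈ H.smul a t → p t ≤ c) : sProdP H a p x ≤ c := by
  rw [sProdP]
  split_ifs with hx
  · exact csSup_le ⟨p hx.choose, hx.choose, hx.choose_spec, rfl⟩
      (by rintro r ⟨s, hs, rfl⟩; exact h s hs)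
  · exact hc

lemma le_sProdN {n : V → ℝ} {x : V} {c : ℝ} (hc : c ≤ 0)
    (h : ∀ t, x ∈ H.smul a t → c ≤ n t) : c ≤ sProdN H a n x := by
  rw [sProdN]
  split_ifs with hx
  · exact le_csInf ⟨n hx.choose, hx.choose, hx.choose_spec, rfl⟩
      (by rintro r ⟨s, hs, rfl⟩; exact h s hs)
  · exact hc

lemma sub_mem_smul
    (hsrd : ∀ (a : K) (x y : V),
      H.smul a (x + y) = Set.image2 (· + ·) (H.smul a x) (H.smul a y))
    {x y s t : V} (hx : x ∈ H.smul a s) (hy : y ∈ H.smul a t) :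
    x - y ∈ H.smul a (s - t) := by
  have h2 : -y ∈ H.smul a (-t) := by rw [H.h4b]; exact ⟨y, hy, rfl⟩
  have h1 : H.smul a (s - t) = Set.image2 (· + ·) (H.smul a s) (H.smul a (-t)) := by
    rw [sub_eq_add_neg, hsrd]
  rw [h1, sub_eq_add_neg]
  exact Set.mem_image2_of_mem hx h2

lemma sProdP_of_ex {p : V → ℝ} {x : V} (hx : ∃ t, x ∈ H.smul a t) :
    sProdP H a p x = sSup {r | ∃ t, x ∈ H.smul a t ∧ r = p t} := by
  rw [sProdP, if_pos hx]

lemma sProdN_of_ex {n : V → ℝ} {x : V} (hx : ∃ t, x ∈ H.smul a t) :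
    sProdN H a n x = sInf {r | ∃ t, x ∈ H.smul a t ∧ r = n t} := by
  rw [sProdN, if_pos hx]

lemma chain_smul {b : K} {u x t : V} (hu : u ∈ H.smul b x) (hx : x ∈ H.smul a t) :
    ∃ w, w ∈ H.smul b t ∧ u ∈ H.smul a w := by
  have h1 : u ∈ H.smul (b * a) t := by
    rw [← H.h3]; exact Set.mem_biUnion hx hu
  rw [mul_comm, ← H.h3] at h1
  obtain ⟨w, hw, hu'⟩ := Set.mem_iUnion₂.mp h1
  exact ⟨w, hw, hu'⟩

end Aux

/-- If `V` is strongly right distributive and `(F,A)` is a bipolar fuzzy soft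
hypervector space of `V`, then `(a ∘ F, A)` is a bipolar fuzzy soft hypervector
space of `V` for every `a ∈ K`. -/
theorem stmt13 {K V E : Type*} [Field K] [AddCommGroup V] (H : HVS K V)
    (hsrd : ∀ (a : K) (x y : V),
      H.smul a (x + y) = Set.image2 (· + ·) (H.smul a x) (H.smul a y))
    (A : Set E) (Fp Fn : E → V → ℝ)
    (hFr : ∀ e ∈ A, ∀ x, Fp e x ∈ Set.Icc (0:ℝ) 1 ∧ Fn e x ∈ Set.Icc (-1:ℝ) 0)
    (hF : ∀ e ∈ A, IsBFSub H (Fp e) (Fn e)) (a : K) :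
    ∀ e ∈ A, IsBFSub H (sProdP H a (Fp e)) (sProdN H a (Fn e)) := by
  intro e he
  obtain ⟨hp, hn, hPinf, hNsup⟩ := hF e he
  have hp0 : ∀ x, 0 ≤ Fp e x := fun x => ((hFr e he x).1).1
  have hp1 : ∀ x, Fp e x ≤ 1 := fun x => ((hFr e he x).1).2
  have hn1 : ∀ x, -1 ≤ Fn e x := fun x => ((hFr e he x).2).1
  have hn0 : ∀ x, Fn e x ≤ 0 := fun x => ((hFr e he x).2).2
  refine ⟨?_, ?_, ?_, ?_⟩
  · intro x y
    by_cases hx : ∃ t, x ∈ H.smul a t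
    · by_cases hy : ∃ t, y ∈ H.smul a t
      · by_contra hcon
        push_neg at hcon
        have hx' := hcon.trans_le (min_le_left _ _)
        have hy' := hcon.trans_le (min_le_right _ _)
        rw [sProdP_of_ex H a hx] at hx'
        rw [sProdP_of_ex H a hy] at hy'
        have hnex : ({r | ∃ t, x ∈ H.smul a t ∧ r = Fp e t} : Set ℝ).Nonempty :=
          ⟨Fp e hx.choose, hx.choose, hx.choose_spec, rfl⟩
        have hney : ({r | ∃ t, y ∈ H.smul a t ∧ r = Fp e t} : Set ℝ).Nonempty :=
          ⟨Fp e hy.choose, hy.choose, hy.choose_spec, rfl⟩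
        obtain ⟨r, ⟨s, hs, rfl⟩, hrs⟩ := exists_lt_of_lt_csSup hnex hx'
        obtain ⟨r', ⟨t, ht, rfl⟩, hrt⟩ := exists_lt_of_lt_csSup hney hy'
        have hst := sub_mem_smul H a hsrd hs ht
        have h1 : Fp e (s - t) ≤ sProdP H a (Fp e) (x - y) :=
          witness_le_sProdP H a hp1 hst
        exact lt_irrefl _ (((lt_min hrs hrt).trans_le (hp s t)).trans_le h1)
      · have h0 : sProdP H a (Fp e) y = 0 := by rw [sProdP, if_neg hy]
        exact le_trans (h0 ▸ min_le_right _ _) (sProdP_nonneg H a hp0 hp1 _)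
    · have h0 : sProdP H a (Fp e) x = 0 := by rw [sProdP, if_neg hx]
      exact le_trans (h0 ▸ min_le_left _ _) (sProdP_nonneg H a hp0 hp1 _)
  · intro x y
    by_cases hx : ∃ t, x ∈ H.smul a t
    · by_cases hy : ∃ t, y ∈ H.smul a t
      · by_contra hcon
        push_neg at hcon
        have hx' := (le_max_left _ _).trans_lt hcon
        have hy' := (le_max_right _ _).trans_lt hcon
        rw [sProdN_of_ex H a hx] at hx'
        rw [sProdN_of_ex H a hy] at hy'
        have hnex : ({r | ∃ t, x ∈ H.smul a t ∧ r = Fn e t} : Set ℝ).Nonempty :=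
          ⟨Fn e hx.choose, hx.choose, hx.choose_spec, rfl⟩
        have hney : ({r | ∃ t, y ∈ H.smul a t ∧ r = Fn e t} : Set ℝ).Nonempty :=
          ⟨Fn e hy.choose, hy.choose, hy.choose_spec, rfl⟩
        obtain ⟨r, ⟨s, hs, rfl⟩, hrs⟩ := exists_lt_of_csInf_lt hnex hx'
        obtain ⟨r', ⟨t, ht, rfl⟩, hrt⟩ := exists_lt_of_csInf_lt hney hy'
        have hst := sub_mem_smul H a hsrd hs ht
        have h1 : sProdN H a (Fn e) (x - y) ≤ Fn e (s - t) :=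
          sProdN_le_witness H a hn1 hst
        exact lt_irrefl _ ((h1.trans (hn s t)).trans_lt (max_lt hrs hrt))
      · have h0 : sProdN H a (Fn e) y = 0 := by rw [sProdN, if_neg hy]
        exact le_trans (sProdN_nonpos H a hn0 hn1 _) (h0 ▸ le_max_right _ _)
    · have h0 : sProdN H a (Fn e) x = 0 := by rw [sProdN, if_neg hx]
      exact le_trans (sProdN_nonpos H a hn0 hn1 _) (h0 ▸ le_max_left _ _)
  · intro b x
    refine le_csInf ?_ ?_
    · obtain ⟨u, hu⟩ := H.nonempty' b x
      exact ⟨_, u, hu, rfl⟩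
    rintro r ⟨u, hu, rfl⟩
    refine sProdP_le H a (sProdP_nonneg H a hp0 hp1 u) ?_
    intro t ht
    obtain ⟨w, hw, huw⟩ := chain_smul H a hu ht
    have h2 : sInf (Fp e '' H.smul b t) ≤ Fp e w :=
      csInf_le ⟨0, by rintro r ⟨z, _, rfl⟩; exact hp0 z⟩ ⟨w, hw, rfl⟩
    exact le_trans (le_trans (hPinf b t) h2) (witness_le_sProdP H a hp1 huw)
  · intro b x
    refine csSup_le ?_ ?_
    · obtain ⟨u, hu⟩ := H.nonempty' b x
      exact ⟨_, u, hu, rfl⟩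
    rintro r ⟨u, hu, rfl⟩
    refine le_sProdN H a (sProdN_nonpos H a hn0 hn1 u) ?_
    intro t ht
    obtain ⟨w, hw, huw⟩ := chain_smul H a hu ht
    have h2 : Fn e w ≤ sSup (Fn e '' H.smul b t) :=
      le_csSup ⟨0, by rintro r ⟨z, _, rfl⟩; exact hn0 z⟩ ⟨w, hw, rfl⟩
    exact le_trans (sProdN_le_witness H a hn1 huw) (le_trans h2 (hNsup b t))
end

section
/- Let T : V → W be a linear transformation between hypervector spaces (T(x+y) = T(x)+T(y) and T(a∘x) ⊆ a∘T(x)) and f : A → B a function. If (G,B) is a bipolar fuzzy soft hypervector space of W, then the preimage (T⁻¹(G), A), defined by T⁻¹(G)⁺ₑ(x) = G⁺_{f(e)}(T(x)) and T⁻¹(G)⁻ₑ(x) = G⁻_{f(e)}(T(x)), is a bipolar fuzzy soft hypervector space of V. -/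
/-! Pulling back along an additive map `T` preserves the two subtraction inequalities since
`T (x - y) = T x - T y`. For the hyperoperation inequalities, `T '' (a ∘ x) ⊆ a ∘ T x`
means the infimum (supremum) over the smaller set can only grow (shrink); the membership
functions are bounded by `0` on the relevant side, which keeps the real `sInf`/`sSup` away from
their junk values on unbounded sets. -/

theorem IsBFSub.comp {K V W : Type*} [Field K] [AddCommGroup V] [AddCommGroup W]
    {HV : HVS K V} {HW : HVS K W} {p n : W → ℝ} (h : IsBFSub HW p n) (T : V →+ W)
    (hT : ∀ a x, T '' HV.smul a x ⊆ HW.smul a (T x))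
    (hp : BddBelow (Set.range p)) (hn : BddAbove (Set.range n)) :
    IsBFSub HV (p ∘ T) (n ∘ T) := by
  obtain ⟨hp_sub, hn_sub, hp_smul, hn_smul⟩ := h
  refine ⟨fun x y => ?_, fun x y => ?_, fun a x => ?_, fun a x => ?_⟩
  · simpa only [Function.comp_apply, map_sub] using hp_sub (T x) (T y)
  · simpa only [Function.comp_apply, map_sub] using hn_sub (T x) (T y)
  · have hsub : (p ∘ T) '' HV.smul a x ⊆ p '' HW.smul a (T x) := by
      rw [Set.image_comp]; exact Set.image_mono (hT a x)
    calc p (T x) ≤ sInf (p '' HW.smul a (T x)) := hp_smul a (T x)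
      _ ≤ sInf ((p ∘ T) '' HV.smul a x) :=
        csInf_le_csInf (hp.mono (Set.image_subset_range _ _)) ((HV.nonempty' a x).image _) hsub
  · have hsub : (n ∘ T) '' HV.smul a x ⊆ n '' HW.smul a (T x) := by
      rw [Set.image_comp]; exact Set.image_mono (hT a x)
    calc sSup ((n ∘ T) '' HV.smul a x) ≤ sSup (n '' HW.smul a (T x)) :=
        csSup_le_csSup (hn.mono (Set.image_subset_range _ _)) ((HV.nonempty' a x).image _) hsub
      _ ≤ n (T x) := hn_smul a (T x)

/-- The preimage of a bipolar fuzzy soft hypervector space under a linear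
transformation is a bipolar fuzzy soft hypervector space. -/
theorem stmt15 {K V W E₁ E₂ : Type*} [Field K] [AddCommGroup V] [AddCommGroup W]
    (HV : HVS K V) (HW : HVS K W) (T : V → W) (f : E₁ → E₂)
    (hTadd : ∀ x y : V, T (x + y) = T x + T y)
    (hTsmul : ∀ (a : K) (x : V), T '' HV.smul a x ⊆ HW.smul a (T x))
    (A : Set E₁) (B : Set E₂) (hf : ∀ e ∈ A, f e ∈ B)
    (Gp Gn : E₂ → W → ℝ)
    (hGr : ∀ u ∈ B, ∀ y, Gp u y ∈ Set.Icc (0:ℝ) 1 ∧ Gn u y ∈ Set.Icc (-1:ℝ) 0)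
    (hG : ∀ u ∈ B, IsBFSub HW (Gp u) (Gn u)) :
    ∀ e ∈ A, IsBFSub HV (fun x => Gp (f e) (T x)) (fun x => Gn (f e) (T x)) := by
  intro e he
  have hu := hf e he
  have hp : BddBelow (Set.range (Gp (f e))) := ⟨0, by rintro _ ⟨y, rfl⟩; exact (hGr _ hu y).1.1⟩
  have hn : BddAbove (Set.range (Gn (f e))) := ⟨0, by rintro _ ⟨y, rfl⟩; exact (hGr _ hu y).2.2⟩
  exact (hG _ hu).comp (AddMonoidHom.mk' T hTadd) hTsmul hp hn
end

section
/- Let V be a hypervector space over K and (F,A), (G,B) bipolar fuzzy soft hypervector spaces of V. Then the extended sum (F +ₑ G, A∪B), defined to equal F on A∖B, G on B∖A, and the sum F+G on A∩B (where (F+G)⁺ₑ(x) = ⨆_{x=y+z} min(F⁺ₑ(y), G⁺ₑ(z)), (F+G)⁻ₑ(x) = ⨅_{x=y+z} max(F⁻ₑ(y), G⁻ₑ(z))), is a bipolar fuzzy soft hypervector space of V. -/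
/-- A hypervector space over a field `K`: an abelian group `V` with an external
hyperoperation `smul : K → V → Set V` satisfying axioms (H1)–(H5). -/
private lemma min_csSup_le' {A B : Set ℝ} (hA : A.Nonempty) (hB : B.Nonempty) {c : ℝ}
    (h : ∀ a ∈ A, ∀ b ∈ B, min a b ≤ c) : min (sSup A) (sSup B) ≤ c := by
  by_contra hc
  push_neg at hc
  rw [lt_min_iff] at hc
  obtain ⟨a, haA, ha⟩ := exists_lt_of_lt_csSup hA hc.1
  obtain ⟨b, hbB, hb⟩ := exists_lt_of_lt_csSup hB hc.2
  exact absurd (h a haA b hbB) (not_le.2 (lt_min ha hb))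

private lemma le_max_csInf' {A B : Set ℝ} (hA : A.Nonempty) (hB : B.Nonempty) {c : ℝ}
    (h : ∀ a ∈ A, ∀ b ∈ B, c ≤ max a b) : c ≤ max (sInf A) (sInf B) := by
  by_contra hc
  push_neg at hc
  rw [max_lt_iff] at hc
  obtain ⟨a, haA, ha⟩ := exists_lt_of_csInf_lt hA hc.1
  obtain ⟨b, hbB, hb⟩ := exists_lt_of_csInf_lt hB hc.2
  exact absurd (h a haA b hbB) (not_le.2 (max_lt ha hb))


/-- The extended sum `(F +ₑ G, A ∪ B)` of bipolar fuzzy soft hypervector spaces,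
equal to `F` on `A ∖ B`, `G` on `B ∖ A`, and `F + G` on `A ∩ B`, is a bipolar
fuzzy soft hypervector space of `V`. -/
theorem stmt18 {K V E : Type*} [Field K] [AddCommGroup V] (H : HVS K V)
    (A B : Set E) (Fp Fn Gp Gn : E → V → ℝ)
    (hFr : ∀ e ∈ A, ∀ x, Fp e x ∈ Set.Icc (0:ℝ) 1 ∧ Fn e x ∈ Set.Icc (-1:ℝ) 0)
    (hGr : ∀ e ∈ B, ∀ x, Gp e x ∈ Set.Icc (0:ℝ) 1 ∧ Gn e x ∈ Set.Icc (-1:ℝ) 0)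
    (hF : ∀ e ∈ A, IsBFSub H (Fp e) (Fn e))
    (hG : ∀ e ∈ B, IsBFSub H (Gp e) (Gn e))
    (Sp Sn : E → V → ℝ)
    (hSp : ∀ e ∈ A ∪ B, ∀ x,
      (e ∈ A \ B → Sp e x = Fp e x) ∧
      (e ∈ B \ A → Sp e x = Gp e x) ∧
      (e ∈ A ∩ B →
        Sp e x = sSup {r | ∃ y z, x = y + z ∧ r = min (Fp e y) (Gp e z)}))
    (hSn : ∀ e ∈ A ∪ B, ∀ x,
      (e ∈ A \ B → Sn e x = Fn e x) ∧
      (e ∈ B \ A → Sn e x = Gn e x) ∧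
      (e ∈ A ∩ B →
        Sn e x = sInf {r | ∃ y z, x = y + z ∧ r = max (Fn e y) (Gn e z)})) :
    ∀ e ∈ A ∪ B, IsBFSub H (Sp e) (Sn e) := by
  intro e he
  by_cases hA : e ∈ A
  · by_cases hB : e ∈ B
    · -- hard case: e ∈ A ∩ B
      obtain ⟨hF1, hF2, hF3, hF4⟩ := hF e hA
      obtain ⟨hG1, hG2, hG3, hG4⟩ := hG e hB
      have hsp : ∀ x, Sp e x
          = sSup {r | ∃ y z, x = y + z ∧ r = min (Fp e y) (Gp e z)} :=
        fun x => (hSp e he x).2.2 ⟨hA, hB⟩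
      have hsn : ∀ x, Sn e x
          = sInf {r | ∃ y z, x = y + z ∧ r = max (Fn e y) (Gn e z)} :=
        fun x => (hSn e he x).2.2 ⟨hA, hB⟩
      have hSne : ∀ x : V,
          ({r | ∃ y z, x = y + z ∧ r = min (Fp e y) (Gp e z)} : Set ℝ).Nonempty :=
        fun x => ⟨min (Fp e x) (Gp e 0), x, 0, (add_zero x).symm, rfl⟩
      have hTne : ∀ x : V,
          ({r | ∃ y z, x = y + z ∧ r = max (Fn e y) (Gn e z)} : Set ℝ).Nonempty :=
        fun x => ⟨max (Fn e x) (Gn e 0), x, 0, (add_zero x).symm, rfl⟩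
      have hSbdd : ∀ x : V,
          BddAbove ({r | ∃ y z, x = y + z ∧ r = min (Fp e y) (Gp e z)} : Set ℝ) := by
        intro x
        refine ⟨1, ?_⟩
        rintro r ⟨y, z, -, rfl⟩
        exact le_trans (min_le_left _ _) (hFr e hA y).1.2
      have hTbdd : ∀ x : V,
          BddBelow ({r | ∃ y z, x = y + z ∧ r = max (Fn e y) (Gn e z)} : Set ℝ) := by
        intro x
        refine ⟨-1, ?_⟩
        rintro r ⟨y, z, -, rfl⟩
        exact le_trans (hFr e hA y).2.1 (le_max_left _ _)
      have hFpb : ∀ s : Set V, BddBelow (Fp e '' s) := by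
        intro s
        refine ⟨0, ?_⟩
        rintro r ⟨t, -, rfl⟩
        exact (hFr e hA t).1.1
      have hGpb : ∀ s : Set V, BddBelow (Gp e '' s) := by
        intro s
        refine ⟨0, ?_⟩
        rintro r ⟨t, -, rfl⟩
        exact (hGr e hB t).1.1
      have hFnb : ∀ s : Set V, BddAbove (Fn e '' s) := by
        intro s
        refine ⟨0, ?_⟩
        rintro r ⟨t, -, rfl⟩
        exact (hFr e hA t).2.2
      have hGnb : ∀ s : Set V, BddAbove (Gn e '' s) := by
        intro s
        refine ⟨0, ?_⟩
        rintro r ⟨t, -, rfl⟩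
        exact (hGr e hB t).2.2
      have keyFp : ∀ a y, ∀ u ∈ H.smul a y, Fp e y ≤ Fp e u :=
        fun a y u hu => le_trans (hF3 a y) (csInf_le (hFpb _) ⟨u, hu, rfl⟩)
      have keyGp : ∀ a y, ∀ u ∈ H.smul a y, Gp e y ≤ Gp e u :=
        fun a y u hu => le_trans (hG3 a y) (csInf_le (hGpb _) ⟨u, hu, rfl⟩)
      have keyFn : ∀ a y, ∀ u ∈ H.smul a y, Fn e u ≤ Fn e y :=
        fun a y u hu => le_trans (le_csSup (hFnb _) ⟨u, hu, rfl⟩) (hF4 a y)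
      have keyGn : ∀ a y, ∀ u ∈ H.smul a y, Gn e u ≤ Gn e y :=
        fun a y u hu => le_trans (le_csSup (hGnb _) ⟨u, hu, rfl⟩) (hG4 a y)
      refine ⟨?_, ?_, ?_, ?_⟩
      · intro x y
        rw [ge_iff_le, hsp, hsp, hsp]
        apply min_csSup_le' (hSne x) (hSne y)
        rintro r₁ ⟨y₁, z₁, rfl, rfl⟩ r₂ ⟨y₂, z₂, rfl, rfl⟩
        have hmem : min (Fp e (y₁ - y₂)) (Gp e (z₁ - z₂))
            ∈ {r | ∃ y z, y₁ + z₁ - (y₂ + z₂) = y + z ∧ r = min (Fp e y) (Gp e z)} :=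
          ⟨y₁ - y₂, z₁ - z₂, by abel, rfl⟩
        refine le_trans (le_min ?_ ?_) (le_csSup (hSbdd _) hmem)
        · exact le_trans (min_le_min (min_le_left _ _) (min_le_left _ _)) (hF1 y₁ y₂)
        · exact le_trans (min_le_min (min_le_right _ _) (min_le_right _ _)) (hG1 z₁ z₂)
      · intro x y
        rw [hsn, hsn, hsn]
        apply le_max_csInf' (hTne x) (hTne y)
        rintro r₁ ⟨y₁, z₁, rfl, rfl⟩ r₂ ⟨y₂, z₂, rfl, rfl⟩
        have hmem : max (Fn e (y₁ - y₂)) (Gn e (z₁ - z₂))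
            ∈ {r | ∃ y z, y₁ + z₁ - (y₂ + z₂) = y + z ∧ r = max (Fn e y) (Gn e z)} :=
          ⟨y₁ - y₂, z₁ - z₂, by abel, rfl⟩
        refine le_trans (csInf_le (hTbdd _) hmem) (max_le ?_ ?_)
        · exact le_trans (hF2 y₁ y₂) (max_le_max (le_max_left _ _) (le_max_left _ _))
        · exact le_trans (hG2 z₁ z₂) (max_le_max (le_max_right _ _) (le_max_right _ _))
      · intro a x
        rw [ge_iff_le, hsp]
        apply le_csInf ((H.nonempty' a x).image _)
        rintro b ⟨t, ht, rfl⟩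
        rw [hsp t]
        apply csSup_le (hSne x)
        rintro r ⟨y, z, hx, rfl⟩
        rw [hx] at ht
        obtain ⟨u, hu, v, hv, rfl⟩ := H.h1 a y z ht
        have hmem : min (Fp e u) (Gp e v)
            ∈ {r | ∃ y z, u + v = y + z ∧ r = min (Fp e y) (Gp e z)} := ⟨u, v, rfl, rfl⟩
        exact le_trans (min_le_min (keyFp a y u hu) (keyGp a z v hv))
          (le_csSup (hSbdd _) hmem)
      · intro a x
        rw [hsn]
        apply csSup_le ((H.nonempty' a x).image _)
        rintro b ⟨t, ht, rfl⟩
        rw [hsn t]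
        apply le_csInf (hTne x)
        rintro r ⟨y, z, hx, rfl⟩
        rw [hx] at ht
        obtain ⟨u, hu, v, hv, rfl⟩ := H.h1 a y z ht
        have hmem : max (Fn e u) (Gn e v)
            ∈ {r | ∃ y z, u + v = y + z ∧ r = max (Fn e y) (Gn e z)} := ⟨u, v, rfl, rfl⟩
        exact le_trans (csInf_le (hTbdd _) hmem)
          (max_le_max (keyFn a y u hu) (keyGn a z v hv))
    · have hp : Sp e = Fp e := funext fun x => (hSp e he x).1 ⟨hA, hB⟩
      have hn : Sn e = Fn e := funext fun x => (hSn e he x).1 ⟨hA, hB⟩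
      rw [hp, hn]
      exact hF e hA
  · have hB : e ∈ B := he.resolve_left hA
    have hp : Sp e = Gp e := funext fun x => (hSp e he x).2.1 ⟨hB, hA⟩
    have hn : Sn e = Gn e := funext fun x => (hSn e he x).2.1 ⟨hB, hA⟩
    rw [hp, hn]
    exact hG e hB
end
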